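/- arXiv:0808.1688 — 6 statements merged into one kernel-verified Lean document; each statement's English description precedes it below -/
import Mathlib

section
/- Let ⪯ be a left-invariant total order on a group Γ, Γ₀ a ⪯-convex subgroup, and ⪯₀ a left-invariant total order on Γ₀. Then the set P = P⁺(⪯₀) ∪ (P⁺(⪯) \ Γ₀) is the positive cone of a left-invariant total order ⪯* on Γ, and Γ₀ remains ⪯*-convex. -/
/-- A subgroup `H` of a left-ordered group is `⪯`-convex if any `g` lying between
two elements of `H` belongs to `H`. -/
def IsConvexSubgroup {Γ : Type*} [Group Γ] [LinearOrder Γ] (H : Subgroup Γ) : Prop :=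
  ∀ g₁ g₂ g : Γ, g₁ ∈ H → g₂ ∈ H → g₁ ≤ g → g ≤ g₂ → g ∈ H

/-- Extension of orderings. Given a left-invariant total order `⪯` on `Γ`,
a `⪯`-convex subgroup `Γ₀`, and a left-invariant total order on `Γ₀` given by a
positive cone `P₀ ⊆ Γ₀`, the set `P = P₀ ∪ ({g | 1 < g} \ Γ₀)` is the positive cone of
a left-invariant total order `⪯*` on `Γ`, and `Γ₀` remains `⪯*`-convex. -/
theorem stmt7 {Γ : Type*} [Group Γ] [LinearOrder Γ]
    [CovariantClass Γ Γ (· * ·) (· ≤ ·)]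
    (Γ₀ : Subgroup Γ) (hΓ₀ : IsConvexSubgroup Γ₀)
    (P₀ : Set Γ) (hP₀sub : P₀ ⊆ (Γ₀ : Set Γ))
    (hmul₀ : ∀ a ∈ P₀, ∀ b ∈ P₀, a * b ∈ P₀)
    (hdisj₀ : ∀ g ∈ P₀, g⁻¹ ∉ P₀)
    (hone₀ : (1 : Γ) ∉ P₀)
    (hcov₀ : ∀ g ∈ Γ₀, g ≠ 1 → g ∈ P₀ ∨ g⁻¹ ∈ P₀) :
    (∀ a ∈ P₀ ∪ ({g : Γ | 1 < g} \ (Γ₀ : Set Γ)),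
       ∀ b ∈ P₀ ∪ ({g : Γ | 1 < g} \ (Γ₀ : Set Γ)),
         a * b ∈ P₀ ∪ ({g : Γ | 1 < g} \ (Γ₀ : Set Γ))) ∧
    (∀ g ∈ P₀ ∪ ({g : Γ | 1 < g} \ (Γ₀ : Set Γ)),
        g⁻¹ ∉ P₀ ∪ ({g : Γ | 1 < g} \ (Γ₀ : Set Γ))) ∧
    ((1 : Γ) ∉ P₀ ∪ ({g : Γ | 1 < g} \ (Γ₀ : Set Γ))) ∧
    (∀ g : Γ, g ≠ 1 → g ∈ P₀ ∪ ({g : Γ | 1 < g} \ (Γ₀ : Set Γ)) ∨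
        g⁻¹ ∈ P₀ ∪ ({g : Γ | 1 < g} \ (Γ₀ : Set Γ))) ∧
    (∀ h g : Γ, g ∈ Γ₀ →
        (h = 1 ∨ h ∈ P₀ ∪ ({g : Γ | 1 < g} \ (Γ₀ : Set Γ))) →
        (h⁻¹ * g = 1 ∨ h⁻¹ * g ∈ P₀ ∪ ({g : Γ | 1 < g} \ (Γ₀ : Set Γ))) →
        h ∈ Γ₀) := by

  constructor
  · -- multiplicative closure
    rintro a (ha | ⟨ha1, haΓ⟩) b (hb | ⟨hb1, hbΓ⟩)
    · exact Or.inl (hmul₀ a ha b hb)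
    · refine Or.inr ⟨?_, fun hab => hbΓ ?_⟩
      · by_contra hle
        simp only [Set.mem_setOf_eq, not_lt] at hle
        have : b ≤ a⁻¹ := by
          have := mul_le_mul_right hle a⁻¹; simpa [mul_assoc] using this
        exact hbΓ (hΓ₀ 1 a⁻¹ b (one_mem _) (inv_mem (hP₀sub ha)) (le_of_lt hb1) this)
      · have : b = a⁻¹ * (a * b) := by group
        rw [this]; exact mul_mem (inv_mem (hP₀sub ha)) hab
    · refine Or.inr ⟨?_, fun hab => haΓ ?_⟩
      · by_contra hle
        simp only [Set.mem_setOf_eq, not_lt] at hle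
        have hba : b ≤ a⁻¹ := by
          have := mul_le_mul_right hle a⁻¹; simpa [mul_assoc] using this
        have hai : a⁻¹ < 1 := by
          have := mul_lt_mul_right ha1 a⁻¹; simpa using this
        have : a⁻¹ ∈ Γ₀ := hΓ₀ b 1 a⁻¹ (hP₀sub hb) (one_mem _) hba (le_of_lt hai)
        exact haΓ (by simpa using inv_mem this)
      · have : a = (a * b) * b⁻¹ := by group
        rw [this]; exact mul_mem hab (inv_mem (hP₀sub hb))
    · refine Or.inr ⟨?_, fun hab => haΓ ?_⟩
      · calc (1:Γ) < a := ha1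
          _ = a * 1 := (mul_one a).symm
          _ ≤ a * b := mul_le_mul_right (le_of_lt hb1) a
      · have hlt : a < a * b := by
          calc a = a * 1 := (mul_one a).symm
            _ < a * b := by
              refine lt_of_le_of_ne (mul_le_mul_right (le_of_lt hb1) a) ?_
              intro h; exact (ne_of_lt hb1) (mul_left_cancel h)
        exact hΓ₀ 1 (a * b) a (one_mem _) hab (le_of_lt ha1) (le_of_lt hlt)
  refine ⟨?_, ?_, ?_, ?_⟩
  · -- disjointness
    rintro g (hg | ⟨hg1, hgΓ⟩)
    · rintro (h | ⟨h1, hΓ'⟩)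
      · exact hdisj₀ g hg h
      · exact hΓ' (inv_mem (hP₀sub hg))
    · rintro (h | ⟨h1, hΓ'⟩)
      · exact hgΓ (by simpa using inv_mem (hP₀sub h))
      · exact absurd h1 (not_lt.mpr (le_of_lt (by simpa using inv_lt_one'.mpr hg1)))
  · -- 1 ∉ P
    rintro (h | ⟨h1, _⟩)
    · exact hone₀ h
    · exact lt_irrefl 1 h1
  · -- totality
    intro g hg
    by_cases hgΓ : g ∈ Γ₀
    · rcases hcov₀ g hgΓ hg with h | h
      · exact Or.inl (Or.inl h)
      · exact Or.inr (Or.inl h)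
    · rcases lt_or_gt_of_ne hg with h | h
      · exact Or.inr (Or.inr ⟨one_lt_inv_of_inv h, fun hc => hgΓ (by simpa using inv_mem hc)⟩)
      · exact Or.inl (Or.inr ⟨h, hgΓ⟩)
  · -- convexity
    rintro h g hgΓ (rfl | hh | ⟨hh1, hhΓ⟩) hig
    · exact one_mem _
    · exact hP₀sub hh
    · rcases hig with hig | hig | ⟨hig1, higΓ⟩
      · have : h = g := by
          have := congrArg (h * ·) hig; simpa [mul_assoc] using this.symm
        exact this ▸ hgΓ
      · have : h = g * (h⁻¹ * g)⁻¹ := by group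
        rw [this]; exact mul_mem hgΓ (inv_mem (hP₀sub hig))
      · have hlt : h < g := by
          have := mul_lt_mul_right hig1 h
          simpa [mul_assoc] using this
        exact hΓ₀ 1 g h (one_mem _) hgΓ (le_of_lt hh1) (le_of_lt hlt)
end

section
/- Let ⪯ be a Conradian left-invariant order on a group Γ, Γ₀ a ⪯-convex subgroup, and ⪯₀ a Conradian left-invariant order on Γ₀. Then the extension of ⪯₀ by ⪯ (with positive cone P⁺(⪯₀) ∪ (P⁺(⪯) \ Γ₀)) is a Conradian left-invariant order on Γ. -/
set_option linter.unusedSectionVars false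
set_option linter.unusedVariables false
set_option linter.unusedTactic false


section StmtAux

variable {Γ : Type*} [Group Γ] [LinearOrder Γ] [CovariantClass Γ Γ (· * ·) (· ≤ ·)]

private lemma lmul_lt (a : Γ) {b c : Γ} (h : b < c) : a * b < a * c :=
  (mul_le_mul_right h.le a).lt_of_ne fun e => h.ne (mul_left_cancel e)

private lemma one_lt_inv_mul {a b : Γ} (h : a < b) : 1 < a⁻¹ * b := by
  have := lmul_lt a⁻¹ h
  rwa [inv_mul_cancel] at this

private lemma one_lt_mul_of_lt {a b : Γ} (ha : 1 < a) (hb : 1 < b) : 1 < a * b :=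
  ha.trans (by simpa using lmul_lt a hb)

private lemma no_both {x : Γ} (h1 : 1 < x) (h2 : 1 < x⁻¹) : False := by
  have h := lmul_lt x h2
  rw [mul_one, mul_inv_cancel] at h
  exact absurd h1 (asymm h)

private lemma dom_lt (Γ₀ : Subgroup Γ) (hΓ₀ : IsConvexSubgroup Γ₀) {g m : Γ}
    (hg1 : 1 < g) (hg : g ∉ Γ₀) (hm : m ∈ Γ₀) : m < g := by
  by_contra hle
  push_neg at hle
  exact hg (hΓ₀ 1 m g Γ₀.one_mem hm hg1.le hle)

private lemma dom_inv (Γ₀ : Subgroup Γ) (hΓ₀ : IsConvexSubgroup Γ₀) {g m : Γ}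
    (hg1 : 1 < g) (hg : g ∉ Γ₀) (hm : m ∈ Γ₀) : g⁻¹ < m := by
  by_contra hle
  push_neg at hle
  have hinv1 : g⁻¹ < 1 := by
    have := lmul_lt g⁻¹ hg1
    simpa using this
  have hmem : g⁻¹ ∈ Γ₀ := hΓ₀ m 1 g⁻¹ hm Γ₀.one_mem hle hinv1.le
  exact hg (by simpa using Γ₀.inv_mem hmem)

/-- Key lemma ("heart"): conjugation by a positive element outside the convex
subgroup keeps elements of the convex subgroup below `g`. -/
private lemma heart (hConrad : ∀ f g : Γ, 1 < f → 1 < g → 1 < g⁻¹ * f * g ^ 2)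
    (Γ₀ : Subgroup Γ) (hΓ₀ : IsConvexSubgroup Γ₀) {a g : Γ}
    (ha : a ∈ Γ₀) (hg1 : 1 < g) (hg : g ∉ Γ₀) : g⁻¹ * a * g < g := by
  by_contra hle
  push_neg at hle
  have hlt : g < g⁻¹ * a * g := by
    refine lt_of_le_of_ne hle ?_
    intro hEq
    have h1 : (g⁻¹ * a) * g = 1 * g := by rw [one_mul]; exact hEq.symm
    have h2 : g⁻¹ * a = 1 := mul_right_cancel h1
    have h3 : g = a := inv_mul_eq_one.mp h2
    exact hg (by rw [h3]; exact ha)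
  have he1 : (1 : Γ) < g⁻¹ * a * g := hg1.trans hlt
  have hs : 1 < g⁻¹ * (g⁻¹ * a * g) := one_lt_inv_mul hlt
  have h3mem : a * a * a ∈ Γ₀ := Γ₀.mul_mem (Γ₀.mul_mem ha ha) ha
  have h3 : a * a * a < g := dom_lt Γ₀ hΓ₀ hg1 hg h3mem
  have hf : 1 < (a * a * a)⁻¹ * g := one_lt_inv_mul h3
  have hX := hConrad ((a * a * a)⁻¹ * g) (g⁻¹ * a * g) hf he1
  have hXid : (g⁻¹ * a * g)⁻¹ * ((a * a * a)⁻¹ * g) * (g⁻¹ * a * g) ^ 2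
      = g⁻¹ * a⁻¹ * g * a⁻¹ * g := by (try simp only [pow_two]); group
  rw [hXid] at hX
  have hY : 1 < (g⁻¹ * a * g) * (g⁻¹ * (g⁻¹ * a * g)) := one_lt_mul_of_lt he1 hs
  have hYid : (g⁻¹ * a * g) * (g⁻¹ * (g⁻¹ * a * g)) = (g⁻¹ * a⁻¹ * g * a⁻¹ * g)⁻¹ := by
    group
  rw [hYid] at hY
  exact no_both hX hY

private lemma posconj (hConrad : ∀ f g : Γ, 1 < f → 1 < g → 1 < g⁻¹ * f * g ^ 2)
    (Γ₀ : Subgroup Γ) (hΓ₀ : IsConvexSubgroup Γ₀) {a g : Γ}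
    (ha : a ∈ Γ₀) (hg1 : 1 < g) (hg : g ∉ Γ₀) : 1 < g⁻¹ * a * g ^ 2 := by
  have h := heart hConrad Γ₀ hΓ₀ (Γ₀.inv_mem ha) hg1 hg
  have h2 := lmul_lt (g⁻¹ * a * g) h
  have e1 : (g⁻¹ * a * g) * (g⁻¹ * a⁻¹ * g) = 1 := by (try simp only [pow_two]); group
  have e2 : (g⁻¹ * a * g) * g = g⁻¹ * a * g ^ 2 := by (try simp only [pow_two]); group
  rw [e1, e2] at h2
  exact h2

private lemma notinconj (hConrad : ∀ f g : Γ, 1 < f → 1 < g → 1 < g⁻¹ * f * g ^ 2)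
    (Γ₀ : Subgroup Γ) (hΓ₀ : IsConvexSubgroup Γ₀) {a g : Γ}
    (ha : a ∈ Γ₀) (hg1 : 1 < g) (hg : g ∉ Γ₀) : g⁻¹ * a * g ^ 2 ∉ Γ₀ := by
  intro hmem
  have hX0 : g⁻¹ * (a⁻¹ * a⁻¹) * g < g :=
    heart hConrad Γ₀ hΓ₀ (Γ₀.mul_mem (Γ₀.inv_mem ha) (Γ₀.inv_mem ha)) hg1 hg
  have hX : 1 < (g⁻¹ * (a * a) * g) * g := by
    have h2 := lmul_lt (g⁻¹ * (a * a) * g) hX0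
    have e1 : (g⁻¹ * (a * a) * g) * (g⁻¹ * (a⁻¹ * a⁻¹) * g) = 1 := by (try simp only [pow_two]); group
    rw [e1] at h2
    exact h2
  have hm' : a⁻¹ * (g⁻¹ * a * g ^ 2) ∈ Γ₀ := Γ₀.mul_mem (Γ₀.inv_mem ha) hmem
  have hY0 : a⁻¹ * (g⁻¹ * a * g ^ 2) < g := dom_lt Γ₀ hΓ₀ hg1 hg hm'
  have hY : 1 < (a⁻¹ * (g⁻¹ * a * g ^ 2))⁻¹ * g := one_lt_inv_mul hY0
  have hW := one_lt_mul_of_lt hX hY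
  have hWid : ((g⁻¹ * (a * a) * g) * g) * ((a⁻¹ * (g⁻¹ * a * g ^ 2))⁻¹ * g)
      = g⁻¹ * a * g * a * g := by (try simp only [pow_two]); group
  rw [hWid] at hW
  have hz0 : g⁻¹ < (g⁻¹ * a * g ^ 2)⁻¹ * (g⁻¹ * a * g ^ 2)⁻¹ :=
    dom_inv Γ₀ hΓ₀ hg1 hg (Γ₀.mul_mem (Γ₀.inv_mem hmem) (Γ₀.inv_mem hmem))
  have hZ : 1 < g * ((g⁻¹ * a * g ^ 2)⁻¹ * (g⁻¹ * a * g ^ 2)⁻¹) := by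
    have h2 := lmul_lt g hz0
    rwa [mul_inv_cancel] at h2
  have hZid : g * ((g⁻¹ * a * g ^ 2)⁻¹ * (g⁻¹ * a * g ^ 2)⁻¹)
      = (g⁻¹ * a * g * a * g)⁻¹ := by (try simp only [pow_two]); group
  rw [hZid] at hZ
  exact no_both hW hZ

private lemma mainnotin (hConrad : ∀ f g : Γ, 1 < f → 1 < g → 1 < g⁻¹ * f * g ^ 2)
    (Γ₀ : Subgroup Γ) (hΓ₀ : IsConvexSubgroup Γ₀) {x g : Γ}
    (hx : 1 < x) (hg1 : 1 < g) (hg : g ∉ Γ₀) : g⁻¹ * x * g ^ 2 ∉ Γ₀ := by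
  intro hmem
  have hxg : 1 < x * g := one_lt_mul_of_lt hx hg1
  have hC := hConrad x (x * g) hx hxg
  have hid : (x * g)⁻¹ * x * (x * g) ^ 2
      = (g⁻¹ * x * g ^ 2) * ((g⁻¹ * x * g ^ 2) * g⁻¹) := by (try simp only [pow_two]); group
  rw [hid] at hC
  have h2 : ((g⁻¹ * x * g ^ 2) * (g⁻¹ * x * g ^ 2))⁻¹ < g⁻¹ := by
    have h3 := lmul_lt ((g⁻¹ * x * g ^ 2) * (g⁻¹ * x * g ^ 2))⁻¹ hC
    have e1 : ((g⁻¹ * x * g ^ 2) * (g⁻¹ * x * g ^ 2))⁻¹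
        * ((g⁻¹ * x * g ^ 2) * ((g⁻¹ * x * g ^ 2) * g⁻¹)) = g⁻¹ := by (try simp only [pow_two]); group
    rw [mul_one, e1] at h3
    exact h3
  have h3 : g⁻¹ < ((g⁻¹ * x * g ^ 2) * (g⁻¹ * x * g ^ 2))⁻¹ :=
    dom_inv Γ₀ hΓ₀ hg1 hg (Γ₀.inv_mem (Γ₀.mul_mem hmem hmem))
  exact absurd h2 (asymm h3)

private lemma stmt8_mul_ls (Γ₀ : Subgroup Γ) (hΓ₀ : IsConvexSubgroup Γ₀) {m p : Γ}
    (hm : m ∈ Γ₀) (hp1 : 1 < p) (hp : p ∉ Γ₀) : 1 < m * p ∧ m * p ∉ Γ₀ := by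
  constructor
  · have h := dom_lt Γ₀ hΓ₀ hp1 hp (Γ₀.inv_mem hm)
    have h2 := lmul_lt m h
    rwa [mul_inv_cancel] at h2
  · intro hmem
    exact hp (by simpa using Γ₀.mul_mem (Γ₀.inv_mem hm) hmem)

private lemma stmt8_mul_sr (Γ₀ : Subgroup Γ) (hΓ₀ : IsConvexSubgroup Γ₀) {p m : Γ}
    (hp1 : 1 < p) (hp : p ∉ Γ₀) (hm : m ∈ Γ₀) : 1 < p * m ∧ p * m ∉ Γ₀ := by
  constructor
  · have h := dom_inv Γ₀ hΓ₀ hp1 hp hm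
    have h2 := lmul_lt p h
    rwa [mul_inv_cancel] at h2
  · intro hmem
    exact hp (by simpa using Γ₀.mul_mem hmem (Γ₀.inv_mem hm))

private lemma stmt8_mul_ss (Γ₀ : Subgroup Γ) (hΓ₀ : IsConvexSubgroup Γ₀) {p q : Γ}
    (hp1 : 1 < p) (hp : p ∉ Γ₀) (hq1 : 1 < q) (hq : q ∉ Γ₀) :
    1 < p * q ∧ p * q ∉ Γ₀ := by
  have hlt : p < p * q := by simpa using lmul_lt p hq1
  exact ⟨hp1.trans hlt, fun hmem => hp (hΓ₀ 1 (p * q) p Γ₀.one_mem hmem hp1.le hlt.le)⟩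

end StmtAux

/-- If `⪯` is a Conradian left-invariant order on `Γ`, `Γ₀` a `⪯`-convex
subgroup, and `⪯₀` (with positive cone `P₀`) a Conradian left-invariant order on `Γ₀`,
then the extension of `⪯₀` by `⪯`, with positive cone `P₀ ∪ ({g | 1 < g} \ Γ₀)`,
is a Conradian left-invariant order on `Γ`. -/
theorem stmt8 {Γ : Type*} [Group Γ] [LinearOrder Γ]
    [CovariantClass Γ Γ (· * ·) (· ≤ ·)]
    (hConrad : ∀ f g : Γ, 1 < f → 1 < g → 1 < g⁻¹ * f * g ^ 2)
    (Γ₀ : Subgroup Γ) (hΓ₀ : IsConvexSubgroup Γ₀)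
    (P₀ : Set Γ) (hP₀sub : P₀ ⊆ (Γ₀ : Set Γ))
    (hmul₀ : ∀ a ∈ P₀, ∀ b ∈ P₀, a * b ∈ P₀)
    (hdisj₀ : ∀ g ∈ P₀, g⁻¹ ∉ P₀)
    (hone₀ : (1 : Γ) ∉ P₀)
    (hcov₀ : ∀ g ∈ Γ₀, g ≠ 1 → g ∈ P₀ ∨ g⁻¹ ∈ P₀)
    (hConrad₀ : ∀ f ∈ P₀, ∀ g ∈ P₀, g⁻¹ * f * g ^ 2 ∈ P₀) :
    (∀ a ∈ P₀ ∪ ({g : Γ | 1 < g} \ (Γ₀ : Set Γ)),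
       ∀ b ∈ P₀ ∪ ({g : Γ | 1 < g} \ (Γ₀ : Set Γ)),
         a * b ∈ P₀ ∪ ({g : Γ | 1 < g} \ (Γ₀ : Set Γ))) ∧
    (∀ g ∈ P₀ ∪ ({g : Γ | 1 < g} \ (Γ₀ : Set Γ)),
        g⁻¹ ∉ P₀ ∪ ({g : Γ | 1 < g} \ (Γ₀ : Set Γ))) ∧
    ((1 : Γ) ∉ P₀ ∪ ({g : Γ | 1 < g} \ (Γ₀ : Set Γ))) ∧
    (∀ g : Γ, g ≠ 1 → g ∈ P₀ ∪ ({g : Γ | 1 < g} \ (Γ₀ : Set Γ)) ∨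
        g⁻¹ ∈ P₀ ∪ ({g : Γ | 1 < g} \ (Γ₀ : Set Γ))) ∧
    (∀ f ∈ P₀ ∪ ({g : Γ | 1 < g} \ (Γ₀ : Set Γ)),
       ∀ g ∈ P₀ ∪ ({g : Γ | 1 < g} \ (Γ₀ : Set Γ)),
         g⁻¹ * f * g ^ 2 ∈ P₀ ∪ ({g : Γ | 1 < g} \ (Γ₀ : Set Γ))) := by
  refine ⟨?_, ?_, ?_, ?_, ?_⟩
  · -- product closure
    intro a ha b hb
    simp only [Set.mem_union, Set.mem_diff, Set.mem_setOf_eq, SetLike.mem_coe] at ha hb ⊢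
    rcases ha with ha | ⟨ha1, ha2⟩ <;> rcases hb with hb | ⟨hb1, hb2⟩
    · exact Or.inl (hmul₀ a ha b hb)
    · exact Or.inr (stmt8_mul_ls Γ₀ hΓ₀ (hP₀sub ha) hb1 hb2)
    · exact Or.inr (stmt8_mul_sr Γ₀ hΓ₀ ha1 ha2 (hP₀sub hb))
    · exact Or.inr (stmt8_mul_ss Γ₀ hΓ₀ ha1 ha2 hb1 hb2)
  · -- disjointness from inverses
    intro g hg hginv
    simp only [Set.mem_union, Set.mem_diff, Set.mem_setOf_eq, SetLike.mem_coe] at hg hginv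
    rcases hg with hg | ⟨hg1, hg2⟩ <;> rcases hginv with hi | ⟨hi1, hi2⟩
    · exact hdisj₀ g hg hi
    · exact hi2 (Γ₀.inv_mem (hP₀sub hg))
    · exact hg2 (by simpa using Γ₀.inv_mem (hP₀sub hi))
    · have : g⁻¹ < 1 := by
        have := lmul_lt g⁻¹ hg1
        simpa using this
      exact absurd hi1 (asymm this)
  · -- 1 is not in the cone
    intro h1
    simp only [Set.mem_union, Set.mem_diff, Set.mem_setOf_eq, SetLike.mem_coe] at h1
    rcases h1 with h1 | ⟨h1, _⟩
    · exact hone₀ h1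
    · exact lt_irrefl 1 h1
  · -- totality
    intro g hgne
    by_cases hmem : g ∈ Γ₀
    · rcases hcov₀ g hmem hgne with h | h
      · exact Or.inl (Or.inl h)
      · exact Or.inr (Or.inl h)
    · rcases lt_trichotomy g 1 with hlt | heq | hgt
      · refine Or.inr (Or.inr ⟨?_, ?_⟩)
        · have := lmul_lt g⁻¹ hlt
          simpa using this
        · simp only [SetLike.mem_coe]
          intro hmem2
          exact hmem (by simpa using Γ₀.inv_mem hmem2)
      · exact absurd heq hgne
      · exact Or.inl (Or.inr ⟨hgt, hmem⟩)
  · -- Conradian property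
    intro f hf g hg
    simp only [Set.mem_union, Set.mem_diff, Set.mem_setOf_eq, SetLike.mem_coe] at hf hg ⊢
    rcases hf with hf | ⟨hf1, hf2⟩ <;> rcases hg with hg | ⟨hg1, hg2⟩
    · exact Or.inl (hConrad₀ f hf g hg)
    · -- f ∈ P₀ ⊆ Γ₀, g positive outside Γ₀
      exact Or.inr ⟨posconj hConrad Γ₀ hΓ₀ (hP₀sub hf) hg1 hg2,
        notinconj hConrad Γ₀ hΓ₀ (hP₀sub hf) hg1 hg2⟩
    · -- f positive outside Γ₀, g ∈ P₀ ⊆ Γ₀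
      have hgm : g ∈ Γ₀ := hP₀sub hg
      have s1 := stmt8_mul_ls Γ₀ hΓ₀ (Γ₀.inv_mem hgm) hf1 hf2
      have s2 := stmt8_mul_sr Γ₀ hΓ₀ s1.1 s1.2 hgm
      have s3 := stmt8_mul_sr Γ₀ hΓ₀ s2.1 s2.2 hgm
      have e : g⁻¹ * f * g ^ 2 = ((g⁻¹ * f) * g) * g := by (try simp only [pow_two]); group
      rw [e]
      exact Or.inr s3
  
    · exact Or.inr ⟨hConrad f g hf1 hg1, mainnotin hConrad Γ₀ hΓ₀ hf1 hg1 hg2⟩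
end

section
/- Let ⪯ be a bi-invariant total order on a group Γ, Γ₀ a ⪯-convex subgroup, and ⪯₀ a bi-invariant total order on Γ₀ whose positive cone is invariant under conjugation by all elements of Γ. Then the extension of ⪯₀ by ⪯, with positive cone P⁺(⪯₀) ∪ (P⁺(⪯) \ Γ₀), is a bi-invariant total order on Γ. -/
/-- If `⪯` is a bi-invariant total order on `Γ`, `Γ₀` a `⪯`-convex
subgroup, and `⪯₀` (with positive cone `P₀`) a bi-invariant total order on `Γ₀` whose
positive cone is invariant under conjugation by all elements of `Γ`, then the extension
of `⪯₀` by `⪯`, with positive cone `P₀ ∪ ({g | 1 < g} \ Γ₀)`, is a bi-invariant total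
order on `Γ`, i.e. its positive cone is a conjugation-invariant positive cone. -/
theorem stmt9 {Γ : Type*} [Group Γ] [LinearOrder Γ]
    [CovariantClass Γ Γ (· * ·) (· ≤ ·)]
    [CovariantClass Γ Γ (Function.swap (· * ·)) (· ≤ ·)]
    (Γ₀ : Subgroup Γ) (hΓ₀ : IsConvexSubgroup Γ₀)
    (P₀ : Set Γ) (hP₀sub : P₀ ⊆ (Γ₀ : Set Γ))
    (hmul₀ : ∀ a ∈ P₀, ∀ b ∈ P₀, a * b ∈ P₀)
    (hdisj₀ : ∀ g ∈ P₀, g⁻¹ ∉ P₀)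
    (hone₀ : (1 : Γ) ∉ P₀)
    (hcov₀ : ∀ g ∈ Γ₀, g ≠ 1 → g ∈ P₀ ∨ g⁻¹ ∈ P₀)
    (hconj₀ : ∀ f ∈ P₀, ∀ g : Γ, g * f * g⁻¹ ∈ P₀) :
    (∀ a ∈ P₀ ∪ ({g : Γ | 1 < g} \ (Γ₀ : Set Γ)),
       ∀ b ∈ P₀ ∪ ({g : Γ | 1 < g} \ (Γ₀ : Set Γ)),
         a * b ∈ P₀ ∪ ({g : Γ | 1 < g} \ (Γ₀ : Set Γ))) ∧
    (∀ g ∈ P₀ ∪ ({g : Γ | 1 < g} \ (Γ₀ : Set Γ)),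
        g⁻¹ ∉ P₀ ∪ ({g : Γ | 1 < g} \ (Γ₀ : Set Γ))) ∧
    ((1 : Γ) ∉ P₀ ∪ ({g : Γ | 1 < g} \ (Γ₀ : Set Γ))) ∧
    (∀ g : Γ, g ≠ 1 → g ∈ P₀ ∪ ({g : Γ | 1 < g} \ (Γ₀ : Set Γ)) ∨
        g⁻¹ ∈ P₀ ∪ ({g : Γ | 1 < g} \ (Γ₀ : Set Γ))) ∧
    (∀ f ∈ P₀ ∪ ({g : Γ | 1 < g} \ (Γ₀ : Set Γ)), ∀ h : Γ,
        h * f * h⁻¹ ∈ P₀ ∪ ({g : Γ | 1 < g} \ (Γ₀ : Set Γ))) := by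

  have hP₀ne1 : ∀ g ∈ P₀, g ≠ 1 := fun g hg h1 => hone₀ (h1 ▸ hg)
  refine ⟨?_, ?_, ?_, ?_, ?_⟩
  · rintro a (ha | ⟨ha1, haΓ⟩) b (hb | ⟨hb1, hbΓ⟩)
    · exact Or.inl (hmul₀ a ha b hb)
    · -- a ∈ P₀, b positive outside Γ₀
      refine Or.inr ⟨?_, ?_⟩
      · rcases lt_or_ge 1 (a * b) with h | h
        · exact h
        · -- a * b ≤ 1 ⇒ b ≤ a⁻¹, so 1 ≤ b ≤ a⁻¹ ∈ Γ₀ ⇒ b ∈ Γ₀, contradiction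
          have hba : b ≤ a⁻¹ := by
            have := mul_le_mul_right h a⁻¹
            simpa [mul_assoc] using this
          exact absurd (hΓ₀ 1 a⁻¹ b Γ₀.one_mem (Γ₀.inv_mem (hP₀sub ha)) hb1.le hba) hbΓ
      · intro hab
        exact hbΓ (by simpa using Γ₀.mul_mem (Γ₀.inv_mem (hP₀sub ha)) hab)
    · -- a positive outside Γ₀, b ∈ P₀
      refine Or.inr ⟨?_, ?_⟩
      · rcases lt_or_ge 1 (a * b) with h | h
        · exact h
        · have hab : a ≤ b⁻¹ := by
            have := mul_le_mul_left h b⁻¹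
            simpa [mul_assoc] using this
          exact absurd (hΓ₀ 1 b⁻¹ a Γ₀.one_mem (Γ₀.inv_mem (hP₀sub hb)) ha1.le hab) haΓ
      · intro hab
        exact haΓ (by simpa [mul_assoc] using Γ₀.mul_mem hab (Γ₀.inv_mem (hP₀sub hb)))
    · -- both positive outside Γ₀
      refine Or.inr ⟨one_lt_mul' ha1 hb1, fun hab => ?_⟩
      have haab : a < a * b := lt_mul_of_one_lt_right' a hb1
      exact haΓ (hΓ₀ 1 (a * b) a Γ₀.one_mem hab ha1.le haab.le)
  · rintro g (hg | ⟨hg1, hgΓ⟩) (hgi | ⟨hgi1, hgiΓ⟩)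
    · exact hdisj₀ g hg hgi
    · exact hgiΓ (Γ₀.inv_mem (hP₀sub hg))
    · exact hgΓ (by simpa using Γ₀.inv_mem (hP₀sub hgi))
    · exact absurd hgi1 (by simpa using not_lt.2 hg1.le)
  · rintro (h | ⟨_, h⟩)
    · exact hone₀ h
    · exact h Γ₀.one_mem
  · intro g hg
    by_cases hgΓ : g ∈ Γ₀
    · rcases hcov₀ g hgΓ hg with h | h
      · exact Or.inl (Or.inl h)
      · exact Or.inr (Or.inl h)
    · rcases hg.lt_or_gt with h | h
      · refine Or.inr (Or.inr ⟨one_lt_inv_of_inv (by simpa using h), fun hc => ?_⟩)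
        exact hgΓ (by simpa using Γ₀.inv_mem hc)
      · exact Or.inl (Or.inr ⟨h, hgΓ⟩)
  · rintro f (hf | ⟨hf1, hfΓ⟩) h
    · exact Or.inl (hconj₀ f hf h)
    · refine Or.inr ⟨?_, fun hc => ?_⟩
      · have := mul_lt_mul_left (mul_lt_mul_right hf1 h) h⁻¹
        simpa using this
      · -- if h*f*h⁻¹ ∈ Γ₀ then by totality its cone membership conjugates back
        have hne : h * f * h⁻¹ ≠ 1 := by
          intro h1
          have : f = 1 := by
            have := congrArg (fun x => h⁻¹ * x * h) h1
            simpa [mul_assoc] using this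
          exact absurd hf1 (by simp [this])
        rcases hcov₀ _ hc hne with hp | hp
        · have := hconj₀ _ hp h⁻¹
          have hf' : f ∈ P₀ := by simpa [mul_assoc] using this
          exact hfΓ (hP₀sub hf')
        · have := hconj₀ _ hp h⁻¹
          have hf' : f⁻¹ ∈ P₀ := by simpa [mul_assoc] using this
          exact hfΓ (by simpa using Γ₀.inv_mem (hP₀sub hf'))
end

section
/- Suppose the positive cone of a bi-invariant total order ⪯ on a group Γ is generated as a normal subsemigroup by elements g₁, …, g_k. Then ⪯ is the unique bi-invariant total order on Γ for which all of g₁, …, g_k are positive. -/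
/-- If the positive cone `P` of a bi-invariant total order on a group
`Γ` is generated, as a normal subsemigroup, by elements `g 1, …, g k`, then this is
the unique bi-invariant total order on `Γ` for which all these elements are positive. -/
theorem stmt11 {Γ : Type*} [Group Γ] (P : Set Γ) {k : ℕ} (g : Fin k → Γ)
    (hmul : ∀ a ∈ P, ∀ b ∈ P, a * b ∈ P)
    (hconj : ∀ f ∈ P, ∀ h : Γ, h * f * h⁻¹ ∈ P)
    (hdisj : ∀ a ∈ P, a⁻¹ ∉ P)
    (hone : (1 : Γ) ∉ P)
    (hcov : ∀ a : Γ, a ≠ 1 → a ∈ P ∨ a⁻¹ ∈ P)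
    (hgi : ∀ i, g i ∈ P)
    (hgen : ∀ Q : Set Γ, (∀ i, g i ∈ Q) → (∀ a ∈ Q, ∀ b ∈ Q, a * b ∈ Q) →
        (∀ a ∈ Q, ∀ h : Γ, h * a * h⁻¹ ∈ Q) → P ⊆ Q) :
    ∀ Q : Set Γ, (∀ a ∈ Q, ∀ b ∈ Q, a * b ∈ Q) →
      (∀ f ∈ Q, ∀ h : Γ, h * f * h⁻¹ ∈ Q) →
      (∀ a ∈ Q, a⁻¹ ∉ Q) → ((1 : Γ) ∉ Q) →
      (∀ a : Γ, a ≠ 1 → a ∈ Q ∨ a⁻¹ ∈ Q) →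
      (∀ i, g i ∈ Q) → Q = P := by
  intro Q hQmul hQconj hQdisj hQone hQcov hQg
  have hPQ : P ⊆ Q := hgen Q hQg hQmul hQconj
  apply Set.eq_of_subset_of_subset _ hPQ
  intro a ha
  rcases hcov a (fun h => hQone (h ▸ ha)) with h | h
  · exact h
  · exact absurd (hPQ h) (hQdisj a ha)
end

section
/- Every total order on ℤ² invariant under translation arises in one of two ways: either there is an irrational λ such that the positive cone is {(m,n) : λm + n > 0} or {(m,n) : λm + n < 0}, or there is a nonzero pair (a,b) ∈ ℤ² and a translation-invariant order on the kernel line {(m,n) : am + bn = 0} such that (m,n) is positive iff am + bn > 0 or (am + bn = 0 and (m,n) is positive in the kernel order). -/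
namespace Stmt14

lemma nsmul_mem {P : Set (ℤ × ℤ)} (hadd : ∀ p ∈ P, ∀ q ∈ P, p + q ∈ P)
    {p : ℤ × ℤ} (hp : p ∈ P) : ∀ k : ℕ, (k + 1) • p ∈ P := by
  intro k
  induction k with
  | zero => simpa using hp
  | succ n ih =>
      have : (n + 1 + 1) • p = (n + 1) • p + p := by
        rw [add_smul, one_smul]
      rw [this]
      exact hadd _ ih _ hp

lemma nsmul_add_mem {P : Set (ℤ × ℤ)} (hadd : ∀ p ∈ P, ∀ q ∈ P, p + q ∈ P)
    {p q : ℤ × ℤ} (hp : p ∈ P) (hq : q ∈ P) : ∀ k : ℕ, k • p + q ∈ P := by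
  intro k
  induction k with
  | zero => simpa using hq
  | succ n ih =>
      have : (n + 1) • p + q = p + (n • p + q) := by
        rw [add_smul, one_smul]; abel
      rw [this]
      exact hadd _ hp _ ih

lemma mem_of_nsmul_mem {P : Set (ℤ × ℤ)}
    (hdisj : ∀ p ∈ P, -p ∉ P) (hzero : (0 : ℤ × ℤ) ∉ P)
    (hcov : ∀ p : ℤ × ℤ, p ≠ 0 → p ∈ P ∨ -p ∈ P)
    (hadd : ∀ p ∈ P, ∀ q ∈ P, p + q ∈ P)
    {p : ℤ × ℤ} {k : ℕ} (h : (k + 1) • p ∈ P) : p ∈ P := by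
  by_contra hp
  have hp0 : p ≠ 0 := by
    rintro rfl
    simp only [smul_zero] at h
    exact hzero h
  rcases hcov p hp0 with h1 | h1
  · exact hp h1
  · have := nsmul_mem hadd h1 k
    rw [smul_neg] at this
    exact hdisj _ h this

lemma mainpos (P : Set (ℤ × ℤ))
    (hadd : ∀ p ∈ P, ∀ q ∈ P, p + q ∈ P)
    (hdisj : ∀ p ∈ P, -p ∉ P)
    (hzero : (0 : ℤ × ℤ) ∉ P)
    (hcov : ∀ p : ℤ × ℤ, p ≠ 0 → p ∈ P ∨ -p ∈ P)
    (h01 : ((0 : ℤ), (1 : ℤ)) ∈ P) :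
    (∃ lam : ℝ, Irrational lam ∧
        (P = {p : ℤ × ℤ | 0 < lam * p.1 + p.2} ∨
         P = {p : ℤ × ℤ | lam * p.1 + p.2 < 0})) ∨
    (∃ a b : ℤ, (a, b) ≠ (0, 0) ∧
      ∃ P₀ : Set (ℤ × ℤ), P₀ ⊆ {p : ℤ × ℤ | a * p.1 + b * p.2 = 0} ∧
        (∀ p ∈ P₀, ∀ q ∈ P₀, p + q ∈ P₀) ∧
        (∀ p ∈ P₀, -p ∉ P₀) ∧
        ((0 : ℤ × ℤ) ∉ P₀) ∧
        (∀ p : ℤ × ℤ, a * p.1 + b * p.2 = 0 → p ≠ 0 → p ∈ P₀ ∨ -p ∈ P₀) ∧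
        P = {p : ℤ × ℤ | 0 < a * p.1 + b * p.2} ∪ P₀) := by
  -- vertical axis
  have haxisp : ∀ n : ℤ, 0 < n → ((0 : ℤ), n) ∈ P := by
    intro n hn
    have h := nsmul_mem hadd h01 (n - 1).toNat
    have he : ((n - 1).toNat + 1) • (((0 : ℤ), (1 : ℤ)) : ℤ × ℤ) = ((0 : ℤ), n) := by
      simp only [Prod.smul_mk, smul_eq_mul, Prod.mk.injEq, nsmul_eq_mul]
      constructor <;> push_cast <;> omega
    rwa [he] at h
  have haxis : ∀ n : ℤ, (((0 : ℤ), n) ∈ P ↔ 0 < n) := by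
    intro n
    constructor
    · intro h
      by_contra hn
      push_neg at hn
      rcases eq_or_lt_of_le hn with h0 | h0
      · subst h0; exact hzero h
      · have := haxisp (-n) (by omega)
        have hne : -(((0 : ℤ), n) : ℤ × ℤ) = ((0 : ℤ), -n) := by simp
        exact hdisj _ h (by rw [hne]; exact this)
    · exact haxisp n
  -- upward closure
  have hup : ∀ m n n' : ℤ, (m, n) ∈ P → n ≤ n' → (m, n') ∈ P := by
    intro m n n' h hle
    rcases eq_or_lt_of_le hle with rfl | hlt
    · exact h
    · have := hadd _ h ((0 : ℤ), n' - n) (haxisp _ (by omega))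
      simpa using this
  by_cases hfull : ∃ d : ℤ, d ≠ 0 ∧ ∀ n : ℤ, (d, n) ∈ P
  · -- lexicographic-type case: a full vertical line in P
    obtain ⟨d, hd0, hdall⟩ := hfull
    have hstrip : ∀ m n : ℤ, 0 < d * m → (m, n) ∈ P := by
      intro m n hdm
      rcases mul_pos_iff.mp hdm with ⟨hd, hm⟩ | ⟨hd, hm⟩
      · have he : ((d - 1).toNat + 1) • ((m, n) : ℤ × ℤ)
            = (m - 1).toNat • ((d, (0 : ℤ)) : ℤ × ℤ) + (d, d * n) := by
          simp only [Prod.smul_mk, Prod.mk_add_mk, smul_eq_mul, Prod.mk.injEq, nsmul_eq_mul]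
          have h1 : ((d - 1).toNat : ℤ) = d - 1 := by omega
          have h2 : ((m - 1).toNat : ℤ) = m - 1 := by omega
          push_cast
          rw [h1, h2]
          constructor <;> ring
        have := nsmul_add_mem hadd (hdall 0) (hdall (d * n)) (m - 1).toNat
        rw [← he] at this
        exact mem_of_nsmul_mem hdisj hzero hcov hadd this
      · have he : ((-d - 1).toNat + 1) • ((m, n) : ℤ × ℤ)
            = (-m - 1).toNat • ((d, (0 : ℤ)) : ℤ × ℤ) + (d, -d * n) := by
          simp only [Prod.smul_mk, Prod.mk_add_mk, smul_eq_mul, Prod.mk.injEq, nsmul_eq_mul]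
          have h1 : ((-d - 1).toNat : ℤ) = -d - 1 := by omega
          have h2 : ((-m - 1).toNat : ℤ) = -m - 1 := by omega
          push_cast
          rw [h1, h2]
          constructor <;> ring
        have := nsmul_add_mem hadd (hdall 0) (hdall (-d * n)) (-m - 1).toNat
        rw [← he] at this
        exact mem_of_nsmul_mem hdisj hzero hcov hadd this
    right
    obtain ⟨s, hs1, hsd⟩ : ∃ s : ℤ, (s = 1 ∨ s = -1) ∧ ∀ m : ℤ, (0 < s * m ↔ 0 < d * m) := by
      rcases lt_trichotomy d 0 with h | h | h
      · refine ⟨-1, Or.inr rfl, fun m => ?_⟩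
        constructor <;> intro hh <;> nlinarith
      · omega
      · refine ⟨1, Or.inl rfl, fun m => ?_⟩
        constructor <;> intro hh <;> nlinarith
    refine ⟨s, 0, ?_, {p : ℤ × ℤ | p.1 = 0 ∧ 0 < p.2}, ?_, ?_, ?_, ?_, ?_, ?_⟩
    · simp only [ne_eq, Prod.mk.injEq, not_and]
      intro h; rcases hs1 with rfl | rfl <;> omega
    · rintro ⟨m, n⟩ ⟨h1, h2⟩
      simp only [Set.mem_setOf_eq]
      simp only [Set.mem_setOf_eq] at h1
      rw [h1]; ring
    · rintro ⟨m, n⟩ ⟨h1, h2⟩ ⟨m', n'⟩ ⟨h1', h2'⟩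
      simp only [Set.mem_setOf_eq, Prod.mk_add_mk] at *
      omega
    · rintro ⟨m, n⟩ ⟨h1, h2⟩ ⟨h1', h2'⟩
      simp only [Set.mem_setOf_eq, Prod.fst_neg, Prod.snd_neg] at *
      omega
    · rintro ⟨h1, h2⟩
      simp at h2
    · rintro ⟨m, n⟩ hk hne
      have hm : m = 0 := by
        simp only [zero_mul, add_zero] at hk
        rcases hs1 with rfl | rfl <;> omega
      subst hm
      have hn : n ≠ 0 := by simpa using hne
      rcases lt_trichotomy n 0 with hh | hh | hh
      · right
        refine ⟨by simp, by simp; omega⟩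
      · omega
      · left; exact ⟨rfl, hh⟩
    · ext ⟨m, n⟩
      simp only [Set.mem_union, Set.mem_setOf_eq, zero_mul, add_zero]
      constructor
      · intro h
        rcases lt_trichotomy (s * m) 0 with hh | hh | hh
        · exfalso
          have h4 : (0 : ℤ) < s * (-m) := by rcases hs1 with rfl | rfl <;> omega
          have h5 := hstrip (-m) (-n) ((hsd (-m)).mp h4)
          have h6 : -((m, n) : ℤ × ℤ) = (-m, -n) := by simp
          exact hdisj _ h (by rw [h6]; exact h5)
        · right
          have hm : m = 0 := by rcases hs1 with rfl | rfl <;> omega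
          subst hm
          exact ⟨rfl, (haxis n).mp h⟩
        · left; exact hh
      · rintro (h | ⟨h1, h2⟩)
        · exact hstrip m n ((hsd m).mp h)
        · have : m = 0 := h1
          subst this
          exact haxisp n h2
  · -- no full vertical line: define the cut function c
    push_neg at hfull
    have hexC : ∀ m : ℤ, ∃ c : ℤ, 0 < m → ((m, c) ∈ P ∧ (m, c - 1) ∉ P) := by
      intro m
      by_cases hm : 0 < m
      · obtain ⟨n₁, hn₁⟩ := hfull m (by omega)
        obtain ⟨n₂, hn₂⟩ := hfull (-m) (by omega)
        have hmem : (m, -n₂) ∈ P := by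
          rcases hcov (m, -n₂) (by simp; omega) with h | h
          · exact h
          · exfalso; apply hn₂; simpa using h
        have hbdd : ∀ z : ℤ, (m, z) ∈ P → n₁ + 1 ≤ z := by
          intro z hz
          by_contra hzle
          exact hn₁ (hup m z n₁ hz (by omega))
        obtain ⟨c, hc1, hc2⟩ := Int.exists_least_of_bdd
          (P := fun z => (m, z) ∈ P) ⟨n₁ + 1, hbdd⟩ ⟨-n₂, hmem⟩
        refine ⟨c, fun _ => ⟨hc1, fun hc3 => ?_⟩⟩
        have := hc2 _ hc3
        omega
      · exact ⟨0, fun h => absurd h hm⟩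
    choose c hc using hexC
    -- characterization of membership for positive first coordinate
    have hchar : ∀ m n : ℤ, 0 < m → ((m, n) ∈ P ↔ c m ≤ n) := by
      intro m n hm
      constructor
      · intro h
        by_contra hle
        exact (hc m hm).2 (hup m n (c m - 1) h (by omega))
      · intro h
        exact hup m (c m) n (hc m hm).1 h
    have hnchar : ∀ m n : ℤ, 0 < m → ((m, n) ∉ P ↔ n ≤ c m - 1) := by
      intro m n hm
      rw [hchar m n hm]; omega
    -- subadditivity and superadditivity
    have hsub : ∀ m m' : ℤ, 0 < m → 0 < m' → c (m + m') ≤ c m + c m' := by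
      intro m m' hm hm'
      have := hadd _ (hc m hm).1 _ (hc m' hm').1
      rw [Prod.mk_add_mk] at this
      exact (hchar _ _ (by omega)).mp this
    have hsuper : ∀ m m' : ℤ, 0 < m → 0 < m' → c m + c m' - 1 ≤ c (m + m') := by
      intro m m' hm hm'
      have h1 : ((-m, 1 - c m) : ℤ × ℤ) ∈ P := by
        rcases hcov (m, c m - 1) (by simp; omega) with h | h
        · exact absurd h (hc m hm).2
        · simpa using h
      have h2 : ((-m', 1 - c m') : ℤ × ℤ) ∈ P := by
        rcases hcov (m', c m' - 1) (by simp; omega) with h | h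
        · exact absurd h (hc m' hm').2
        · simpa using h
      have h3 := hadd _ h1 _ h2
      rw [Prod.mk_add_mk] at h3
      have h4 : ((m + m', c m + c m' - 2) : ℤ × ℤ) ∉ P := by
        intro h5
        apply hdisj _ h5
        have he : -((m + m', c m + c m' - 2) : ℤ × ℤ) = (-m + -m', 1 - c m + (1 - c m')) := by
          simp only [Prod.neg_mk, Prod.mk.injEq]; omega
        rw [he]; exact h3
      have := (hnchar _ _ (by omega)).mp h4
      omega
    -- iterated versions
    have hksub : ∀ m : ℤ, 0 < m → ∀ k : ℤ, 1 ≤ k → c (k * m) ≤ k * c m := by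
      intro m hm
      refine Int.le_induction (motive := fun k _ => c (k * m) ≤ k * c m) (m := 1) (by simp) ?_
      intro k hk ih
      have h1 : (k + 1) * m = k * m + m := by ring
      have h2 := hsub (k * m) m (mul_pos (by omega) hm) hm
      rw [h1]
      nlinarith
    have hksuper : ∀ m : ℤ, 0 < m → ∀ k : ℤ, 1 ≤ k → k * (c m - 1) + 1 ≤ c (k * m) := by
      intro m hm
      refine Int.le_induction (motive := fun k _ => k * (c m - 1) + 1 ≤ c (k * m)) (m := 1) (by simp) ?_
      intro k hk ih
      have h1 : (k + 1) * m = k * m + m := by ring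
      have h2 := hsuper (k * m) m (mul_pos (by omega) hm) hm
      rw [h1]
      nlinarith
    -- the cross inequality in ℤ
    have hcross : ∀ m k : ℤ, 0 < m → 0 < k → k * c m - k + 1 ≤ m * c k := by
      intro m k hm hk
      have h1 := hksuper m hm k (by omega)
      have h2 := hksub k hk m (by omega)
      rw [mul_comm m k] at h2
      nlinarith
    -- define μ as the sup
    set A : Set ℝ := {x : ℝ | ∃ m : ℤ, 0 < m ∧ x = ((c m : ℝ) - 1) / m} with hA
    have hAne : A.Nonempty := ⟨((c 1 : ℝ) - 1) / 1, 1, by norm_num⟩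
    have hAbdd : ∀ x ∈ A, x ≤ (c 1 : ℝ) / 1 := by
      rintro x ⟨m, hm, rfl⟩
      rw [div_le_div_iff₀ (by exact_mod_cast hm) (by norm_num)]
      have h' : ((m : ℝ)) * c 1 ≥ 1 * c m - 1 + 1 := by exact_mod_cast hcross m 1 hm one_pos
      nlinarith
    set μ : ℝ := sSup A with hμ
    have hμlb : ∀ m : ℤ, 0 < m → ((c m : ℝ) - 1) / m ≤ μ :=
      fun m hm => le_csSup ⟨(c 1 : ℝ) / 1, fun x hx => hAbdd x hx⟩ ⟨m, hm, rfl⟩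
    have hμub : ∀ k : ℤ, 0 < k → μ ≤ (c k : ℝ) / k := by
      intro k hk
      apply csSup_le hAne
      rintro x ⟨m, hm, rfl⟩
      rw [div_le_div_iff₀ (by exact_mod_cast hm) (by exact_mod_cast hk)]
      have h' : ((k : ℝ)) * c m - k + 1 ≤ m * c k := by exact_mod_cast hcross m k hm hk
      nlinarith
    have hb : ∀ m : ℤ, 0 < m → ((c m : ℝ) - 1 ≤ μ * m ∧ μ * m ≤ c m) := by
      intro m hm
      have hmr : (0 : ℝ) < m := by exact_mod_cast hm
      constructor
      · have := hμlb m hm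
        rw [div_le_iff₀ hmr] at this
        linarith
      · have := hμub m hm
        rw [le_div_iff₀ hmr] at this
        linarith
    -- membership characterization with μ
    have hP1 : ∀ m n : ℤ, 0 < m → μ * m < n → (m, n) ∈ P := by
      intro m n hm h
      have h2 := (hb m hm).1
      have h3 : (c m : ℝ) - 1 < n := by linarith
      have h4 : c m ≤ n := by
        have h5 : (c m : ℝ) < n + 1 := by linarith
        have h6 : (c m : ℤ) < n + 1 := by exact_mod_cast h5
        omega
      exact (hchar m n hm).mpr h4
    have hP2 : ∀ m n : ℤ, 0 < m → (n : ℝ) < μ * m → (m, n) ∉ P := by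
      intro m n hm h
      have h2 := (hb m hm).2
      have h3 : (n : ℝ) < c m := by linarith
      have h4 : n ≤ c m - 1 := by
        have h6 : (n : ℤ) < c m := by exact_mod_cast h3
        omega
      exact (hnchar m n hm).mpr h4
    have hQ1 : ∀ p : ℤ × ℤ, μ * p.1 < p.2 → p ∈ P := by
      rintro ⟨m, n⟩ h
      simp only at h
      rcases lt_trichotomy m 0 with hm | hm | hm
      · have hnot : ((-m, -n) : ℤ × ℤ) ∉ P := by
          apply hP2 (-m) (-n) (by omega)
          push_cast
          nlinarith
        rcases hcov (m, n) (by simp; omega) with hh | hh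
        · exact hh
        · exfalso; apply hnot; simpa using hh
      · subst hm
        simp only [Int.cast_zero, mul_zero] at h
        exact haxisp n (by exact_mod_cast h)
      · exact hP1 m n hm h
    have hQ2 : ∀ p : ℤ × ℤ, (p.2 : ℝ) < μ * p.1 → p ∉ P := by
      rintro ⟨m, n⟩ h hp
      apply hdisj _ hp
      have : -((m, n) : ℤ × ℤ) = (-m, -n) := by simp
      rw [this]
      apply hQ1
      simp only
      push_cast
      simp only at h
      nlinarith
    by_cases hirr : Irrational μ
    · left
      refine ⟨-μ, hirr.neg, Or.inl ?_⟩
      ext ⟨m, n⟩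
      simp only [Set.mem_setOf_eq]
      constructor
      · intro hp
        rcases lt_trichotomy ((n : ℝ)) (μ * m) with hh | hh | hh
        · exact absurd hp (hQ2 (m, n) hh)
        · exfalso
          rcases eq_or_ne m 0 with rfl | hm0
          · simp at hh
            have : n = 0 := by exact_mod_cast hh
            subst this
            exact hzero hp
          · apply hirr
            refine ⟨(n : ℚ) / (m : ℚ), ?_⟩
            have hmr : ((m : ℝ)) ≠ 0 := by exact_mod_cast hm0
            push_cast
            field_simp
            linarith [hh]
        · linarith
      · intro hp
        exact hQ1 (m, n) (by linarith)
    · right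
      rw [Irrational, not_not] at hirr
      obtain ⟨r, hr⟩ := hirr
      set q : ℤ := r.num with hq
      set pd : ℤ := (r.den : ℤ) with hpd
      have hpd0 : 0 < pd := by rw [hpd]; exact_mod_cast r.pos
      have hμr : μ = (q : ℝ) / pd := by
        rw [← hr, hq, hpd]
        conv_lhs => rw [← Rat.num_div_den r]
        push_cast
        ring
      have hkey : ∀ m n : ℤ, (0 < -q * m + pd * n) ↔ μ * m < n := by
        intro m n
        rw [hμr]
        have hpdr : (0 : ℝ) < pd := by exact_mod_cast hpd0
        rw [div_mul_eq_mul_div, div_lt_iff₀ hpdr]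
        constructor
        · intro h
          have : (0 : ℝ) < -q * m + pd * n := by exact_mod_cast h
          push_cast
          nlinarith
        · intro h
          have : (q : ℝ) * m < pd * n := by nlinarith
          have h2 : q * m < pd * n := by exact_mod_cast this
          linarith
      refine ⟨-q, pd, ?_, {x : ℤ × ℤ | x ∈ P ∧ -q * x.1 + pd * x.2 = 0}, ?_, ?_, ?_, ?_, ?_, ?_⟩
      · simp only [ne_eq, Prod.mk.injEq, not_and]
        intro _; omega
      · rintro ⟨m, n⟩ ⟨h1, h2⟩
        exact h2
      · rintro ⟨m, n⟩ ⟨h1, h2⟩ ⟨m', n'⟩ ⟨h1', h2'⟩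
        refine ⟨hadd _ h1 _ h1', ?_⟩
        simp only [Prod.mk_add_mk]
        simp only [Set.mem_setOf_eq] at h2 h2'
        linear_combination h2 + h2' 
      · rintro ⟨m, n⟩ ⟨h1, h2⟩ ⟨h1', h2'⟩
        exact hdisj _ h1 h1'
      · rintro ⟨h1, h2⟩
        exact hzero h1
      · rintro ⟨m, n⟩ hk hne
        rcases hcov (m, n) hne with h | h
        · left; exact ⟨h, hk⟩
        · right
          refine ⟨h, ?_⟩
          simp only [Prod.fst_neg, Prod.snd_neg]
          linear_combination -hk
      · ext ⟨m, n⟩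
        simp only [Set.mem_union, Set.mem_setOf_eq]
        constructor
        · intro hp
          rcases lt_trichotomy (-q * m + pd * n) 0 with hh | hh | hh
          · exfalso
            refine hQ2 (m, n) ?_ hp
            simp only
            have : (0 : ℤ) < -q * (-m) + pd * (-n) := by linarith
            have := (hkey (-m) (-n)).mp this
            push_cast at this
            nlinarith
          · right; exact ⟨hp, hh⟩
          · left; exact hh
        · rintro (h | ⟨h1, _⟩)
          · exact hQ1 (m, n) ((hkey m n).mp h)
          · exact h1

end Stmt14



/-- Every positive cone `P` of a translation-invariant total order on
`ℤ²` is of one of two kinds: either there is an irrational `λ` with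
`P = {(m,n) : λ m + n > 0}` or `P = {(m,n) : λ m + n < 0}`, or there is a nonzero pair
`(a,b) ∈ ℤ²` and a positive cone `P₀` of a translation-invariant order on the kernel
line `{(m,n) : a m + b n = 0}` with `P = {(m,n) : a m + b n > 0} ∪ P₀`. -/
theorem stmt14 (P : Set (ℤ × ℤ))
    (hadd : ∀ p ∈ P, ∀ q ∈ P, p + q ∈ P)
    (hdisj : ∀ p ∈ P, -p ∉ P)
    (hzero : (0 : ℤ × ℤ) ∉ P)
    (hcov : ∀ p : ℤ × ℤ, p ≠ 0 → p ∈ P ∨ -p ∈ P) :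
    (∃ lam : ℝ, Irrational lam ∧
        (P = {p : ℤ × ℤ | 0 < lam * p.1 + p.2} ∨
         P = {p : ℤ × ℤ | lam * p.1 + p.2 < 0})) ∨
    (∃ a b : ℤ, (a, b) ≠ (0, 0) ∧
      ∃ P₀ : Set (ℤ × ℤ), P₀ ⊆ {p : ℤ × ℤ | a * p.1 + b * p.2 = 0} ∧
        (∀ p ∈ P₀, ∀ q ∈ P₀, p + q ∈ P₀) ∧
        (∀ p ∈ P₀, -p ∉ P₀) ∧
        ((0 : ℤ × ℤ) ∉ P₀) ∧
        (∀ p : ℤ × ℤ, a * p.1 + b * p.2 = 0 → p ≠ 0 → p ∈ P₀ ∨ -p ∈ P₀) ∧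
        P = {p : ℤ × ℤ | 0 < a * p.1 + b * p.2} ∪ P₀) := by
  rcases hcov ((0 : ℤ), (1 : ℤ)) (by simp) with h01 | h01
  · exact Stmt14.mainpos P hadd hdisj hzero hcov h01
  · -- apply the main lemma to the reflected cone Q = -P
    set Q : Set (ℤ × ℤ) := {p : ℤ × ℤ | -p ∈ P} with hQ
    have hQadd : ∀ p ∈ Q, ∀ q ∈ Q, p + q ∈ Q := by
      intro p hp q hq
      have := hadd _ hp _ hq
      simp only [hQ, Set.mem_setOf_eq] at *
      rw [neg_add]
      exact this
    have hQdisj : ∀ p ∈ Q, -p ∉ Q := by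
      intro p hp hnp
      simp only [hQ, Set.mem_setOf_eq, neg_neg] at hp hnp
      exact hdisj _ hnp hp
    have hQzero : (0 : ℤ × ℤ) ∉ Q := by
      simp only [hQ, Set.mem_setOf_eq, neg_zero]
      exact hzero
    have hQcov : ∀ p : ℤ × ℤ, p ≠ 0 → p ∈ Q ∨ -p ∈ Q := by
      intro p hp
      rcases hcov (-p) (by simpa using hp) with h | h
      · left; simpa [hQ] using h
      · right; simpa [hQ] using h
    have hQ01 : ((0 : ℤ), (1 : ℤ)) ∈ Q := by
      simp only [hQ, Set.mem_setOf_eq, Prod.neg_mk, neg_zero]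
      exact h01
    have hPQ : ∀ p : ℤ × ℤ, p ∈ P ↔ -p ∈ Q := by
      intro p
      simp [hQ]
    rcases Stmt14.mainpos Q hQadd hQdisj hQzero hQcov hQ01 with ⟨lam, hirr, hl | hl⟩ | ⟨a, b, hab, P₀, hk, ha, hd, hz, hc, he⟩
    · left
      refine ⟨lam, hirr, Or.inr ?_⟩
      ext ⟨m, n⟩
      rw [Set.mem_setOf_eq, hPQ (m, n), hl]
      simp only [Set.mem_setOf_eq, Prod.neg_mk]
      push_cast
      constructor <;> intro h <;> linarith
    · left
      refine ⟨lam, hirr, Or.inl ?_⟩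
      ext ⟨m, n⟩
      rw [Set.mem_setOf_eq, hPQ (m, n), hl]
      simp only [Set.mem_setOf_eq, Prod.neg_mk]
      push_cast
      constructor <;> intro h <;> linarith
    · right
      refine ⟨-a, -b, ?_, {p : ℤ × ℤ | -p ∈ P₀}, ?_, ?_, ?_, ?_, ?_, ?_⟩
      · simp only [ne_eq, Prod.mk.injEq, neg_eq_zero, not_and] at hab ⊢
        intro h1 h2
        rcases eq_or_ne a 0 with rfl | h
        · exact hab rfl h2
        · exact h h1
      · rintro ⟨m, n⟩ hp
        have := hk hp
        simp only [Set.mem_setOf_eq, Prod.fst_neg, Prod.snd_neg] at this ⊢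
        linarith
      · intro p hp q hq
        have := ha _ hp _ hq
        simp only [Set.mem_setOf_eq] at *
        rw [neg_add]
        exact this
      · intro p hp hnp
        simp only [Set.mem_setOf_eq, neg_neg] at hp hnp
        exact hd _ hnp hp
      · simp only [Set.mem_setOf_eq, neg_zero]
        exact hz
      · intro p hker hp
        have h2 : a * (-p).1 + b * (-p).2 = 0 := by
          simp only [Prod.fst_neg, Prod.snd_neg]
          linarith
        rcases hc (-p) h2 (by simpa using hp) with h | h
        · left; simpa using h
        · right; simpa using h
      · ext ⟨m, n⟩
        rw [hPQ (m, n), he]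
        simp only [Set.mem_union, Set.mem_setOf_eq, Prod.neg_mk]
        constructor <;> rintro (h | h)
        · left; linarith
        · right; exact h
        · left; linarith
        · right; exact h
end

section
/- Let Γ be a group equipped with a left-invariant total order and suppose the positive cone of the order is generated as a semigroup by finitely many elements g₁, …, g_k. Then this order is an isolated point of the space of left-orderings of Γ. -/
/-- If the positive cone `P` of a left-invariant total order on a group
`Γ` is generated as a semigroup by finitely many elements `g 1, …, g k`, then the
order is isolated in the space of left-orderings of `Γ`: there is a finite set `F` of
elements of `Γ` such that any positive cone of a left-invariant total order that
agrees with `P` on `F` equals `P`. -/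
theorem stmt15 {Γ : Type*} [Group Γ] (P : Set Γ) {k : ℕ} (g : Fin k → Γ)
    (hmul : ∀ a ∈ P, ∀ b ∈ P, a * b ∈ P)
    (hdisj : ∀ a ∈ P, a⁻¹ ∉ P)
    (hone : (1 : Γ) ∉ P)
    (hcov : ∀ a : Γ, a ≠ 1 → a ∈ P ∨ a⁻¹ ∈ P)
    (hgi : ∀ i, g i ∈ P)
    (hgen : ∀ Q : Set Γ, (∀ i, g i ∈ Q) → (∀ a ∈ Q, ∀ b ∈ Q, a * b ∈ Q) → P ⊆ Q) :
    ∃ F : Finset Γ, ∀ Q : Set Γ,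
      (∀ a ∈ Q, ∀ b ∈ Q, a * b ∈ Q) →
      (∀ a ∈ Q, a⁻¹ ∉ Q) → ((1 : Γ) ∉ Q) →
      (∀ a : Γ, a ≠ 1 → a ∈ Q ∨ a⁻¹ ∈ Q) →
      (∀ x ∈ F, (x ∈ Q ↔ x ∈ P)) → Q = P := by
  classical
  refine ⟨Finset.image g Finset.univ, fun Q hQmul hQdisj hQone hQcov hagree => ?_⟩
  have hgQ : ∀ i, g i ∈ Q := fun i =>
    (hagree (g i) (Finset.mem_image_of_mem g (Finset.mem_univ i))).2 (hgi i)
  have hPQ : P ⊆ Q := hgen Q hgQ hQmul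
  apply Set.Subset.antisymm _ hPQ
  intro a haQ
  by_contra haP
  have hane : a ≠ 1 := fun h => hQone (h ▸ haQ)
  rcases hcov a hane with h | h
  · exact haP h
  · exact hQdisj a haQ (hPQ h)
end
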